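/- The Held–Spirkl recursion identity: for Boolean variables t_0,...,t_{m-1} and an integer λ with 2λ < m - 1, g(t_0,...,t_{m-1}) = g(t_0,...,t_{2λ}) ∧ ((t_1 ∨ t_3 ∨ ... ∨ t_{2λ+1}) ∨ g(t_{2λ+2},...,t_{m-1})). -/

import Mathlib

mutual
  /-- And-Or path starting with AND: `gA [t₀,…,t_{m-1}] = t₀ ∧ (t₁ ∨ (t₂ ∧ …))`. -/
  def gA : List Bool → Bool
    | [] => false
    | t :: r => t && gO r
  /-- Dual And-Or path starting with OR: `gO [t₀,…] = t₀ ∨ (t₁ ∧ …)`. -/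
  def gO : List Bool → Bool
    | [] => true
    | t :: r => t || gA r
end

/-!
Peeling two variables `a, b` off the front, `a ∧ (b ∨ X)` and `(a ∧ (b ∨ Y)) ∧ (b ∨ Z)` agree
whenever `X = Y ∧ Z`: if `b` holds both are `a`, otherwise both are `a ∧ X`. Hence after an
odd-length prefix, the odd-indexed variables of the prefix can be pulled out into one disjunction
in front of the remaining path, which starts with `∨` at the variable `t_{2λ+1}`.
-/

namespace List

/-- The entries `l[1], l[3], l[5], …` (positions counted from `0`). -/
def oddEntries {α : Type*} : List α → List α
  | _ :: b :: r => b :: oddEntries r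
  | _ => []

theorem oddEntries_map {α β : Type*} (f : α → β) : ∀ u : List α,
    oddEntries (u.map f) = (oddEntries u).map f
  | [] | [_] => rfl
  | _ :: _ :: r => by simp [oddEntries, oddEntries_map f r]

theorem oddEntries_range' (s step : ℕ) : ∀ n : ℕ,
    oddEntries (range' s n step) = range' (s + step) (n / 2) (2 * step)
  | 0 | 1 => rfl
  | n + 2 => by
    rw [range'_succ, range'_succ, oddEntries, oddEntries_range' (s + step + step) step n,
      show (n + 2) / 2 = n / 2 + 1 by omega, range'_succ]
    congr 2
    ring

end List

open List

theorem gA_append_of_odd_length : ∀ u v : List Bool, Odd u.length →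
    gA (u ++ v) = (gA u && ((oddEntries u).any id || gO v))
  | [], _, h | [_, _], _, h => by simp [Nat.odd_iff] at h
  | [a], v, _ => by simp [gA, gO, oddEntries]
  | a :: b :: c :: r, v, h => by
    have ih := gA_append_of_odd_length (c :: r) v (by simpa [Nat.odd_add_one] using h)
    simp only [cons_append, gA, gO, oddEntries, any_cons, id] at ih ⊢
    rw [ih]
    cases a <;> cases b <;> simp

/-- Held–Spirkl recursion: for `2λ < m - 1`,
`g(t₀,…,t_{m-1}) = g(t₀,…,t_{2λ}) ∧ ((t₁ ∨ t₃ ∨ … ∨ t_{2λ+1}) ∨ g(t_{2λ+2},…,t_{m-1}))`. -/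
theorem aop_recursion_held_spirkl (m lam : ℕ) (t : ℕ → Bool) (h : 2 * lam + 1 < m) :
    gA ((List.range m).map t) =
      (gA ((List.range (2 * lam + 1)).map t) &&
        ((((List.range' 1 (lam + 1) 2).map t).any id) ||
          gA ((List.range' (2 * lam + 2) (m - (2 * lam + 2))).map t))) := by
  obtain ⟨n, rfl⟩ : ∃ n, m = 2 * lam + 2 + n := ⟨m - (2 * lam + 2), by omega⟩
  have hsplit : range (2 * lam + 2 + n) =
      range (2 * lam + 1) ++ (2 * lam + 1) :: range' (2 * lam + 2) n := by
    rw [show 2 * lam + 2 + n = 2 * lam + 1 + (n + 1) by omega, range_eq_range', range_eq_range',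
      ← range'_append_1, zero_add]
    rfl
  have hodd : oddEntries ((range (2 * lam + 1)).map t) = (range' 1 lam 2).map t := by
    rw [oddEntries_map, range_eq_range', oddEntries_range']
    congr 2
    omega
  rw [hsplit, map_append, gA_append_of_odd_length _ _ (by simp), hodd, map_cons, gO,
    range'_concat, map_append, show 1 + 2 * lam = 2 * lam + 1 by ring, Nat.add_sub_cancel_left]
  simp [Bool.or_assoc]
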